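/- arXiv:1909.06938 — 7 statements merged into one kernel-verified Lean document; each statement's English description precedes it below -/
import Mathlib

section
/- Let A = [[0, I], [−L, −I]] with L·𝟏ₙ = 0, and let C output cᵢ·(xᵢ + vᵢ) for monitored agents i = 1,…,m with cᵢ ≠ 0 (partial observation with equal position and velocity coefficients). Then the vector w = (𝟏ₙ, −𝟏ₙ) satisfies C·Aᵏ·w = 0 for all k ≥ 0. -/
open Matrix

/-- With partial outputs `cᵢ (xᵢ + vᵢ)`, the vector `(𝟏, −𝟏)` lies in the
kernel of every block `C Aᵏ` of the observability matrix. -/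
theorem partial_output_unobservable_direction
    {n m : ℕ} (hm : m ≤ n)
    (L : Matrix (Fin n) (Fin n) ℝ)
    (hL1 : L.mulVec (fun _ => 1) = 0)
    (A : Matrix (Fin n ⊕ Fin n) (Fin n ⊕ Fin n) ℝ)
    (hA : A = Matrix.fromBlocks 0 1 (-L) (-1))
    (c : Fin m → ℝ) (hc : ∀ i, c i ≠ 0)
    (C : Matrix (Fin m) (Fin n ⊕ Fin n) ℝ)
    (hC : ∀ i j, C i j =
      if j = Sum.inl (Fin.castLE hm i) ∨ j = Sum.inr (Fin.castLE hm i) then c i else 0) :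
    ∀ k : ℕ,
      C.mulVec ((A ^ k).mulVec (Sum.elim (fun _ => (1 : ℝ)) (fun _ => -1))) = 0 := by
  set w : Fin n ⊕ Fin n → ℝ := Sum.elim (fun _ => (1 : ℝ)) (fun _ => -1) with hw
  have hAw : A.mulVec w = -w := by
    subst hA
    rw [hw, fromBlocks_mulVec]
    have h1 : L.mulVec (fun _ => (1 : ℝ)) = 0 := hL1
    funext j
    cases j with
    | inl j =>
      simp [mulVec, dotProduct, Matrix.one_apply]
    | inr j =>
      have := congrFun h1 j
      simp [neg_mulVec, this]
  have hpow : ∀ k : ℕ, (A ^ k).mulVec w = ((-1 : ℝ) ^ k) • w := by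
    intro k
    induction k with
    | zero => simp
    | succ k ih =>
      rw [pow_succ', ← mulVec_mulVec, ih, mulVec_smul, hAw, pow_succ,
        smul_neg, ← neg_smul, mul_neg_one]
  have hCw : C.mulVec w = 0 := by
    funext i
    rw [hw]
    simp [mulVec, dotProduct, Fintype.sum_sum_type, hC]
  intro k
  rw [hpow k, mulVec_smul, hCw, smul_zero]
end

section
/- Let L ∈ ℝ^{n×n} be symmetric positive semidefinite with L·𝟏ₙ = 0, and suppose L has n distinct eigenvalues 0 = λ₁ < λ₂ < … < λₙ with orthonormal eigenvector matrix Q (columns qⱼ). If there exists a row index i such that every entry Q_{i,j} ≠ 0 for all j, then for any nonzero vector p ∈ ℝⁿ there exists an eigenvalue λⱼ such that the component of p along qⱼ is nonzero and eᵢᵀ·qⱼ ≠ 0; consequently the pair (L, eᵢᵀ) is observable, i.e., ∩_{k=0}^{n−1} ker(eᵢᵀ·Lᵏ) = {0}. -/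
open Matrix

/-- If the Laplacian `L` has distinct eigenvalues and some row `i` of its
orthogonal eigenvector matrix has all entries nonzero, then every nonzero
vector has a nonzero component along some eigenvector visible from node `i`,
and the pair `(L, eᵢᵀ)` is observable. -/
theorem laplacian_single_node_observable
    {n : ℕ} (L : Matrix (Fin n) (Fin n) ℝ)
    (hLsym : L.IsSymm) (hLpsd : L.PosSemidef)
    (hL1 : L.mulVec (fun _ => 1) = 0)
    (Q : Matrix (Fin n) (Fin n) ℝ) (hQ : Q * Qᵀ = 1)
    (lam : Fin n → ℝ) (hdistinct : Function.Injective lam)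
    (hspec : L = Q * Matrix.diagonal lam * Qᵀ)
    (i : Fin n) (hrow : ∀ j, Q i j ≠ 0) :
    (∀ p : Fin n → ℝ, p ≠ 0 →
      ∃ j, (Qᵀ.mulVec p) j ≠ 0 ∧ Q i j ≠ 0) ∧
    (∀ p : Fin n → ℝ, (∀ k < n, ((L ^ k).mulVec p) i = 0) → p = 0) := by
  have hQ' : Qᵀ * Q = 1 := mul_eq_one_comm.mp hQ
  have hrecover : ∀ p : Fin n → ℝ, Q.mulVec (Qᵀ.mulVec p) = p := by
    intro p
    rw [Matrix.mulVec_mulVec, hQ, Matrix.one_mulVec]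
  constructor
  · intro p hp
    by_contra h
    push_neg at h
    have : Qᵀ.mulVec p = 0 := by
      funext j
      by_contra hj
      exact hrow j (h j hj)
    exact hp (by rw [← hrecover p, this, Matrix.mulVec_zero])
  · intro p hcond
    set c := Qᵀ.mulVec p with hc
    have hLk : ∀ k : ℕ, L ^ k = Q * (Matrix.diagonal lam) ^ k * Qᵀ := by
      intro k
      induction k with
      | zero => simp [hQ]
      | succ k ih =>
        rw [pow_succ, pow_succ, ih, hspec]
        simp only [Matrix.mul_assoc]
        rw [← Matrix.mul_assoc Qᵀ Q, hQ', Matrix.one_mul]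
    have hentry : ∀ k : ℕ, ((L ^ k).mulVec p) i = ∑ j, (Q i j * c j) * lam j ^ k := by
      intro k
      rw [hLk k, ← Matrix.mulVec_mulVec, ← hc, ← Matrix.mulVec_mulVec]
      have hdiag : ((Matrix.diagonal lam) ^ k).mulVec c = fun j => lam j ^ k * c j := by
        rw [Matrix.diagonal_pow]
        funext j
        simp [Matrix.mulVec_diagonal]
      rw [hdiag]
      simp only [Matrix.mulVec, dotProduct]
      exact Finset.sum_congr rfl fun j _ => by ring
    have hv : (fun j => Q i j * c j) = 0 := by
      apply Matrix.eq_zero_of_forall_pow_sum_mul_pow_eq_zero hdistinct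
      intro k
      have := hcond (k : ℕ) k.isLt
      rw [hentry k] at this
      exact this
    have hc0 : c = 0 := by
      funext j
      have := congrFun hv j
      simp only [Pi.zero_apply] at this ⊢
      exact (mul_eq_zero.mp this).resolve_left (hrow j)
    rw [← hrecover p, ← hc, hc0, Matrix.mulVec_zero]
end

section
/- Let A₁, A₂ ∈ ℝ^{N×N} and C ∈ ℝ^{m×N}, and let N₂ = ker O(A₂, C) and N₁ = ker O(A₁, C) ∩ e^{−A₁τ}·N₂, where O(A, C) = [C; CA; …; CA^{N−1}] and τ > 0. If z₀ ∈ N₁, then the switched trajectory z(t) = e^{A₁ t} z₀ for t ∈ [0, τ) and z(t) = e^{A₂(t−τ)} e^{A₁ τ} z₀ for t ≥ τ satisfies C·z(t) = 0 for all t ≥ 0. -/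
/-!
By Cayley–Hamilton, the algebra generated by `A` is spanned by `A ^ k` for `k < N`; it is finite
dimensional, hence closed, so it also contains `exp (t • A)`. Thus `v ∈ ker O(A, C)` forces
`C (exp (t • A) v) = 0` for every `t`. Applied to `A₁, z₀` before the switch and to
`A₂, exp (τ • A₁) z₀` after it, this kills the output of the switched trajectory.
-/

open Matrix

theorem Subalgebra.exp_mem_of_finiteDimensional {𝕜 𝔸 : Type*} [NontriviallyNormedField 𝕜]
    [CompleteSpace 𝕜] [Algebra ℚ 𝕜] [Ring 𝔸] [Algebra 𝕜 𝔸] [Algebra ℚ 𝔸] [IsScalarTower ℚ 𝕜 𝔸]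
    [TopologicalSpace 𝔸] [IsTopologicalRing 𝔸] [T2Space 𝔸] [ContinuousSMul 𝕜 𝔸]
    [FiniteDimensional 𝕜 𝔸] (s : Subalgebra 𝕜 𝔸) {x : 𝔸} (hx : x ∈ s) :
    NormedSpace.exp x ∈ s :=
  NormedSpace.exp_mem (R := 𝕜) (s := s) (Subalgebra.toSubmodule s).closed_of_finiteDimensional hx

theorem Matrix.adjoin_singleton_le_of_pow_mem {R n : Type*} [CommRing R] [Nontrivial R]
    [Fintype n] [DecidableEq n] (A : Matrix n n R) {S : Submodule R (Matrix n n R)}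
    (hS : ∀ k < Fintype.card n, A ^ k ∈ S) :
    Subalgebra.toSubmodule (Algebra.adjoin R {A}) ≤ S := by
  refine (Submodule.span_range_natDegree_eq_adjoin A.charpoly_monic
    A.aeval_self_charpoly).ge.trans ?_
  simp only [Submodule.span_le, charpoly_natDegree_eq_dim, Finset.coe_image, Finset.coe_range,
    Set.image_subset_iff]
  exact hS

theorem Matrix.mulVec_exp_smul_mulVec_eq_zero {m n : Type*} [Fintype m] [Fintype n]
    [DecidableEq n] (A : Matrix n n ℝ) (C : Matrix m n ℝ) {v : n → ℝ}
    (hv : ∀ k < Fintype.card n, C *ᵥ (A ^ k *ᵥ v) = 0) (t : ℝ) :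
    C *ᵥ (NormedSpace.exp (t • A) *ᵥ v) = 0 := by
  let output : Matrix n n ℝ →ₗ[ℝ] m → ℝ := C.mulVecLin ∘ₗ (mulVecBilin ℝ ℝ).flip v
  have hadjoin : Subalgebra.toSubmodule (Algebra.adjoin ℝ {A}) ≤ LinearMap.ker output :=
    A.adjoin_singleton_le_of_pow_mem hv
  exact hadjoin <| Subalgebra.exp_mem_of_finiteDimensional _ <|
    Subalgebra.smul_mem _ (Algebra.self_mem_adjoin_singleton ℝ A) t

theorem switched_kernel_zero_output_general
    {N m : ℕ} (A₁ A₂ : Matrix (Fin N) (Fin N) ℝ) (C : Matrix (Fin m) (Fin N) ℝ)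
    (τ : ℝ) (z₀ : Fin N → ℝ)
    (h1 : ∀ k < N, C.mulVec ((A₁ ^ k).mulVec z₀) = 0)
    (h2 : ∀ k < N,
      C.mulVec ((A₂ ^ k).mulVec ((NormedSpace.exp (τ • A₁)).mulVec z₀)) = 0)
    (z : ℝ → Fin N → ℝ)
    (hz : ∀ t, z t = if t < τ then (NormedSpace.exp (t • A₁)).mulVec z₀
      else (NormedSpace.exp ((t - τ) • A₂)).mulVec
        ((NormedSpace.exp (τ • A₁)).mulVec z₀)) :
    ∀ t ≥ (0 : ℝ), C.mulVec (z t) = 0 := by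
  intro t _
  rw [hz t]
  split_ifs
  · exact A₁.mulVec_exp_smul_mulVec_eq_zero C (fun k hk ↦ h1 k (by simpa using hk)) t
  · exact A₂.mulVec_exp_smul_mulVec_eq_zero C (fun k hk ↦ h2 k (by simpa using hk)) (t - τ)

/-- If `z₀` lies in `ker O(A₁,C) ∩ e^{−A₁τ} ker O(A₂,C)`, then the switched
trajectory produces identically zero output. -/
theorem switched_kernel_zero_output
    {N m : ℕ} (A₁ A₂ : Matrix (Fin N) (Fin N) ℝ) (C : Matrix (Fin m) (Fin N) ℝ)
    (τ : ℝ) (hτ : 0 < τ) (z₀ : Fin N → ℝ)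
    (h1 : ∀ k < N, C.mulVec ((A₁ ^ k).mulVec z₀) = 0)
    (h2 : ∀ k < N,
      C.mulVec ((A₂ ^ k).mulVec ((NormedSpace.exp (τ • A₁)).mulVec z₀)) = 0)
    (z : ℝ → Fin N → ℝ)
    (hz : ∀ t, z t = if t < τ then (NormedSpace.exp (t • A₁)).mulVec z₀
      else (NormedSpace.exp ((t - τ) • A₂)).mulVec
        ((NormedSpace.exp (τ • A₁)).mulVec z₀)) :
    ∀ t ≥ (0 : ℝ), C.mulVec (z t) = 0 :=
  switched_kernel_zero_output_general A₁ A₂ C τ z₀ h1 h2 z hz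
end

section
/- Let A = [[0, I], [−L, −I]] with L symmetric, L·𝟏 = 0, having distinct eigenvalues, and let C select position outputs of monitored agents: C·(x,v) = (c₁x₁, …, cₘxₘ) with all cᵢ ≠ 0 and the Laplacian–output pair satisfying: some row i ≤ m of the orthogonal eigenvector matrix Q of L has all entries nonzero. Then the pair (A, C) is observable: ker O(A, C) = {0}. -/
/-!
Write `x k` for the position block of `A ^ k *ᵥ w`, so that `x (k + 2) = -L x k - x (k + 1)`.
In the eigenbasis of `L` the modal coordinates `(Qᵀ x k) j` decouple into scalar recurrences with
characteristic polynomials `X² + X + λ_j`, which are pairwise coprime since the `λ_j` are distinct.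
The observed position `x k i = ∑ j, Q i j (Qᵀ x k) j` is therefore annihilated by the product of
these polynomials, which has degree `2n`, so its vanishing for `k < 2n` makes it vanish for all `k`;
coprimality then forces every summand `Q i j (Qᵀ x k) j` to vanish. As `Q i j ≠ 0` and `Q` is
invertible, `x 0 = x 1 = 0`, and these are the two blocks of `w`.
-/

open Function Matrix Polynomial

section CoprimeKernels

variable {R M ι : Type*} [CommRing R]

theorem monic_X_sq_add_X_add_C (μ : R) : (X ^ 2 + X + C μ).Monic := by
  monicity!

theorem natDegree_X_sq_add_X_add_C [Nontrivial R] (μ : R) : (X ^ 2 + X + C μ).natDegree = 2 := by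
  compute_degree!

theorem isCoprime_add_C_add_C {K : Type*} [Field K] (p : K[X]) {μ ν : K} (h : μ ≠ ν) :
    IsCoprime (p + C μ) (p + C ν) := by
  refine ⟨C (μ - ν)⁻¹, -C (μ - ν)⁻¹, ?_⟩
  calc C (μ - ν)⁻¹ * (p + C μ) + -C (μ - ν)⁻¹ * (p + C ν) = C ((μ - ν)⁻¹ * (μ - ν)) := by
        rw [C_mul, C_sub]; ring
    _ = 1 := by rw [inv_mul_cancel₀ (sub_ne_zero.2 h), C_1]

variable [AddCommGroup M] [Module R M]

theorem aeval_apply_eq_zero_of_dvd (f : Module.End R M) {p q : R[X]} (hpq : p ∣ q) {v : M}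
    (hv : aeval f p v = 0) : aeval f q v = 0 := by
  obtain ⟨r, rfl⟩ := hpq
  rw [mul_comm, aeval_mul, Module.End.mul_apply, hv, map_zero]

theorem eq_zero_of_sum_eq_zero_of_pairwise_isCoprime [Fintype ι] (f : Module.End R M)
    {p : ι → R[X]} (hp : Pairwise (IsCoprime on p)) {v : ι → M}
    (hv : ∀ j, aeval f (p j) (v j) = 0) (hsum : ∑ j, v j = 0) (j : ι) : v j = 0 := by
  classical
  set q := ∏ t ∈ Finset.univ.erase j, p t
  have hq : aeval f q (v j) = 0 := by
    have h := congrArg (aeval f q) hsum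
    rwa [map_zero, ← Finset.add_sum_erase _ _ (Finset.mem_univ j), map_add, map_sum,
      Finset.sum_eq_zero fun t ht => aeval_apply_eq_zero_of_dvd f (Finset.dvd_prod_of_mem p ht)
        (hv t), add_zero] at h
  have hcop : IsCoprime (p j) q :=
    IsCoprime.prod_right fun t ht => hp (Finset.ne_of_mem_erase ht).symm
  exact (Submodule.mem_bot R).1 ((disjoint_ker_aeval_of_isCoprime f hcop).le_bot ⟨hv j, hq⟩)

end CoprimeKernels

section Shift

variable {R ι : Type*} [CommRing R]

/-- Through `aeval`, the left shift makes `ℕ → R` an `R[X]`-module in which the solutions of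
the linear recurrence with characteristic polynomial `p` are the kernel of `p`. -/
def seqShift : Module.End R (ℕ → R) where
  toFun a k := a (k + 1)
  map_add' _ _ := rfl
  map_smul' _ _ := rfl

theorem seqShift_pow_apply (t : ℕ) (a : ℕ → R) (k : ℕ) : (seqShift ^ t) a k = a (k + t) := by
  induction t generalizing a k with
  | zero => rfl
  | succ t ih =>
    rw [pow_succ, Module.End.mul_apply, ih]
    rfl

theorem aeval_seqShift_apply (p : R[X]) (a : ℕ → R) (k : ℕ) :
    aeval seqShift p a k = ∑ t ∈ Finset.range (p.natDegree + 1), p.coeff t * a (k + t) := by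
  simp [aeval_eq_sum_range, LinearMap.sum_apply, seqShift_pow_apply]

theorem aeval_seqShift_X_sq_add_X_add_C (μ : R) (a : ℕ → R) :
    aeval seqShift (X ^ 2 + X + C μ) a = fun k => a (k + 2) + a (k + 1) + μ * a k := by
  funext k
  simp only [map_add, aeval_X_pow, aeval_X, aeval_C, Module.algebraMap_end_apply,
    LinearMap.add_apply, Pi.add_apply, seqShift_pow_apply, Pi.smul_apply, smul_eq_mul]
  rfl

theorem eq_zero_of_aeval_seqShift_eq_zero {p : R[X]} (hp : p.Monic) {a : ℕ → R}
    (hpa : aeval seqShift p a = 0) (h0 : ∀ k < p.natDegree, a k = 0) : a = 0 := by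
  suffices ∀ k, a k = 0 from funext this
  intro k
  induction k using Nat.strong_induction_on with
  | _ k ih =>
    obtain hk | hk := lt_or_ge k p.natDegree
    · exact h0 k hk
    obtain ⟨j, rfl⟩ := Nat.exists_eq_add_of_le' hk
    have hj := congrFun hpa j
    rw [aeval_seqShift_apply, Finset.sum_range_succ, hp.coeff_natDegree, one_mul,
      Finset.sum_eq_zero fun t ht => by rw [ih _ (by simp at ht; omega), mul_zero]] at hj
    simpa using hj

theorem eq_zero_of_aeval_seqShift_eq_zero_of_sum [Fintype ι] {p : ι → R[X]}
    (hmonic : ∀ j, (p j).Monic) (hp : Pairwise (IsCoprime on p)) {a : ι → ℕ → R}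
    (ha : ∀ j, aeval seqShift (p j) (a j) = 0)
    (h0 : ∀ k < ∑ j, (p j).natDegree, ∑ j, a j k = 0) (j : ι) : a j = 0 := by
  refine eq_zero_of_sum_eq_zero_of_pairwise_isCoprime seqShift hp ha ?_ j
  refine eq_zero_of_aeval_seqShift_eq_zero (p := ∏ j, p j)
    (monic_prod_of_monic _ _ fun j _ => hmonic j) ?_ ?_
  · rw [map_sum]
    exact Finset.sum_eq_zero fun j hj =>
      aeval_apply_eq_zero_of_dvd _ (Finset.dvd_prod_of_mem p hj) (ha j)
  · rw [natDegree_prod_of_monic _ _ fun j _ => hmonic j]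
    simpa [Finset.sum_apply] using h0

end Shift

section SecondOrder

variable {R ι κ : Type*} [CommRing R] [Fintype ι] [DecidableEq ι]

/-- The state matrix of the second-order consensus dynamics `ẍ = -L x - ẋ` in the coordinates
`(x, ẋ)`. -/
def secondOrderMatrix (L : Matrix ι ι R) : Matrix (ι ⊕ ι) (ι ⊕ ι) R :=
  fromBlocks 0 1 (-L) (-1)

theorem secondOrderMatrix_mulVec (L : Matrix ι ι R) (z : ι ⊕ ι → R) :
    secondOrderMatrix L *ᵥ z = Sum.elim (z ∘ Sum.inr) (-(L *ᵥ (z ∘ Sum.inl)) - z ∘ Sum.inr) := by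
  simp [secondOrderMatrix, fromBlocks_mulVec, neg_mulVec, sub_eq_add_neg]

theorem secondOrderMatrix_pow_add_two_mulVec_inl (L : Matrix ι ι R) (w : ι ⊕ ι → R) (k : ℕ) :
    (secondOrderMatrix L ^ (k + 2) *ᵥ w) ∘ Sum.inl =
      -(L *ᵥ ((secondOrderMatrix L ^ k *ᵥ w) ∘ Sum.inl)) -
        (secondOrderMatrix L ^ (k + 1) *ᵥ w) ∘ Sum.inl := by
  simp only [pow_succ', ← mulVec_mulVec, secondOrderMatrix_mulVec, Sum.elim_comp_inl,
    Sum.elim_comp_inr]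

theorem aeval_seqShift_modal_eq_zero [Fintype κ] [DecidableEq κ] (L : Matrix ι ι R)
    (P : Matrix κ ι R) (lam : κ → R) (hP : P * L = diagonal lam * P) (w : ι ⊕ ι → R) (j : κ) :
    aeval seqShift (X ^ 2 + X + C (lam j))
      (fun k => (P *ᵥ ((secondOrderMatrix L ^ k *ᵥ w) ∘ Sum.inl)) j) = 0 := by
  rw [aeval_seqShift_X_sq_add_X_add_C]
  funext k
  rw [secondOrderMatrix_pow_add_two_mulVec_inl, mulVec_sub, mulVec_neg, mulVec_mulVec, hP,
    ← mulVec_mulVec]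
  simp only [Pi.sub_apply, Pi.neg_apply, Pi.zero_apply, mulVec_diagonal]
  ring

end SecondOrder

theorem position_output_observable_general
    {n m : ℕ} (hm : m ≤ n)
    (L : Matrix (Fin n) (Fin n) ℝ)
    (Q : Matrix (Fin n) (Fin n) ℝ) (hQ : Q * Qᵀ = 1)
    (lam : Fin n → ℝ) (hdistinct : Function.Injective lam)
    (hspec : L = Q * Matrix.diagonal lam * Qᵀ)
    (i : Fin n) (hi : (i : ℕ) < m) (hrow : ∀ j, Q i j ≠ 0)
    (A : Matrix (Fin n ⊕ Fin n) (Fin n ⊕ Fin n) ℝ)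
    (hA : A = Matrix.fromBlocks 0 1 (-L) (-1))
    (c : Fin m → ℝ) (hc : ∀ k, c k ≠ 0)
    (C : Matrix (Fin m) (Fin n ⊕ Fin n) ℝ)
    (hC : ∀ k j, C k j = if j = Sum.inl (Fin.castLE hm k) then c k else 0) :
    ∀ w : Fin n ⊕ Fin n → ℝ,
      (∀ k < 2 * n, C.mulVec ((A ^ k).mulVec w) = 0) → w = 0 := by
  intro w hobs
  subst hA
  set x : ℕ → Fin n → ℝ := fun k => (secondOrderMatrix L ^ k *ᵥ w) ∘ Sum.inl
  have hmode := aeval_seqShift_modal_eq_zero L Qᵀ lam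
    (by rw [hspec, ← Matrix.mul_assoc, ← Matrix.mul_assoc, mul_eq_one_comm.1 hQ, Matrix.one_mul]) w
  have hx : ∀ k, x k = Q *ᵥ (Qᵀ *ᵥ x k) := fun k => by rw [mulVec_mulVec, hQ, one_mulVec]
  have hobs_i : ∀ k < 2 * n, x k i = 0 := fun k hk => by
    have hCz : ∀ z, (C *ᵥ z) ⟨i, hi⟩ = c ⟨i, hi⟩ * z (Sum.inl i) := fun z => by
      simp [mulVec, dotProduct, hC]
    have h := congrFun (hobs k hk) ⟨i, hi⟩
    rw [hCz] at h
    exact (mul_eq_zero.1 h).resolve_left (hc _)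
  have hmodal : ∀ j, Q i j • (fun k => (Qᵀ *ᵥ x k) j) = 0 :=
    eq_zero_of_aeval_seqShift_eq_zero_of_sum (fun j => monic_X_sq_add_X_add_C (lam j))
      (fun j t hjt => isCoprime_add_C_add_C _ (hdistinct.ne hjt))
      (fun j => by rw [map_smul, hmode, smul_zero])
      (fun k hk => by
        simp only [natDegree_X_sq_add_X_add_C, Finset.sum_const, Finset.card_univ,
          Fintype.card_fin, smul_eq_mul] at hk
        have hxi := hobs_i k (by omega)
        rw [hx k] at hxi
        simpa [mulVec, dotProduct] using hxi)
  have hx0 : ∀ k, x k = 0 := fun k => by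
    rw [hx k, show Qᵀ *ᵥ x k = 0 from funext fun j =>
      congrFun ((smul_eq_zero.1 (hmodal j)).resolve_left (hrow j)) k, mulVec_zero]
  ext (t | t)
  · simpa [x] using congrFun (hx0 0) t
  · simpa [x, secondOrderMatrix_mulVec] using congrFun (hx0 1) t

/-- With position-only outputs and a Laplacian satisfying the defense
conditions (distinct eigenvalues, a monitored row of the eigenvector matrix
with all entries nonzero), the pair `(A, C)` is observable. -/
theorem position_output_observable
    {n m : ℕ} (hm : m ≤ n)
    (L : Matrix (Fin n) (Fin n) ℝ) (hLsym : L.IsSymm)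
    (hL1 : L.mulVec (fun _ => 1) = 0)
    (Q : Matrix (Fin n) (Fin n) ℝ) (hQ : Q * Qᵀ = 1)
    (lam : Fin n → ℝ) (hdistinct : Function.Injective lam)
    (hspec : L = Q * Matrix.diagonal lam * Qᵀ)
    (i : Fin n) (hi : (i : ℕ) < m) (hrow : ∀ j, Q i j ≠ 0)
    (A : Matrix (Fin n ⊕ Fin n) (Fin n ⊕ Fin n) ℝ)
    (hA : A = Matrix.fromBlocks 0 1 (-L) (-1))
    (c : Fin m → ℝ) (hc : ∀ k, c k ≠ 0)
    (C : Matrix (Fin m) (Fin n ⊕ Fin n) ℝ)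
    (hC : ∀ k j, C k j = if j = Sum.inl (Fin.castLE hm k) then c k else 0) :
    ∀ w : Fin n ⊕ Fin n → ℝ,
      (∀ k < 2 * n, C.mulVec ((A ^ k).mulVec w) = 0) → w = 0 :=
  position_output_observable_general hm L Q hQ lam hdistinct hspec i hi hrow A hA c hc C hC
end

section
/- Let A = [[0, I], [−L, −I]] with L symmetric, L·𝟏 = 0 with distinct eigenvalues and a row i of its eigenvector matrix having all entries nonzero, and let C output velocities (C·(x,v) = (c₁v₁,…,cₘvₘ), cᵢ ≠ 0). Then ker O(A, C) = span{(𝟏ₙ, 0ₙ)}, i.e., the unobservable subspace is exactly the one-dimensional space of uniform position translations. -/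
/-!
If all `2n` outputs vanish, so does the `i`-th velocity of `q(A) w` for every polynomial `q` of
degree `< 2n`. Since `A² + A = diag(-L, -L)`, the choices `q = (X² + X)ᵏ` and `q = (X² + X)ᵏ X`
with `k < n` give `((-L)ᵏ v)ᵢ = 0` and `((-L)ᵏ (-L x - v))ᵢ = 0` for `w = (x, v)`. In the eigenbasis
of `L` these are Vandermonde systems in the distinct eigenvalues, weighted by the nonzero entries
of row `i` of `Q`, so `v = 0` and `L x = 0`. As `L` has simple spectrum and `L 𝟏 = 0`, `x` is a
multiple of `𝟏`.
-/

open Matrix Polynomial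

theorem mulVec_aeval_mulVec_eq_zero {R ι κ : Type*} [CommRing R] [Fintype ι] [DecidableEq ι]
    {A : Matrix ι ι R} {C : Matrix κ ι R} {w : ι → R} {N : ℕ}
    (h : ∀ k < N, C *ᵥ (A ^ k *ᵥ w) = 0) {q : R[X]} (hq : q.natDegree < N) :
    C *ᵥ (aeval A q *ᵥ w) = 0 := by
  rw [aeval_eq_sum_range' hq, sum_mulVec, mulVec_sum]
  refine Finset.sum_eq_zero fun k hk => ?_
  rw [smul_mulVec, mulVec_smul, h k (Finset.mem_range.1 hk), smul_zero]

section Conjugation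

variable {R ι : Type*} [CommRing R] [Fintype ι] [DecidableEq ι]

theorem conj_diagonal_pow {Q : Matrix ι ι R} (hQ : Q * Qᵀ = 1) (d : ι → R) (k : ℕ) :
    (Q * diagonal d * Qᵀ) ^ k = Q * diagonal (d ^ k) * Qᵀ := by
  let u : (Matrix ι ι R)ˣ := ⟨Q, Qᵀ, hQ, mul_eq_one_comm.mp hQ⟩
  rw [← diagonal_pow]
  exact u.conj_pow (diagonal d) k

theorem conj_diagonal_mulVec_apply (Q : Matrix ι ι R) (d z : ι → R) (i : ι) :
    ((Q * diagonal d * Qᵀ) *ᵥ z) i = ∑ j, Q i j * (d j * (Qᵀ *ᵥ z) j) := by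
  rw [← mulVec_mulVec, ← mulVec_mulVec]
  show ∑ j, Q i j * (diagonal d *ᵥ (Qᵀ *ᵥ z)) j = _
  simp only [mulVec_diagonal]

theorem mulVec_transpose_mulVec {Q : Matrix ι ι R} (hQ : Q * Qᵀ = 1) (z : ι → R) :
    Q *ᵥ (Qᵀ *ᵥ z) = z := by
  rw [mulVec_mulVec, hQ, one_mulVec]

theorem conj_diagonal_mulVec_eq_zero_iff {Q : Matrix ι ι R} (hQ : Q * Qᵀ = 1) {d z : ι → R} :
    (Q * diagonal d * Qᵀ) *ᵥ z = 0 ↔ ∀ j, d j * (Qᵀ *ᵥ z) j = 0 := by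
  have hQ' : Qᵀ * Q = 1 := mul_eq_one_comm.mp hQ
  rw [← mulVec_mulVec, ← mulVec_mulVec]
  constructor
  · intro h j
    have hdiag : diagonal d *ᵥ (Qᵀ *ᵥ z) = 0 := by
      rw [← one_mulVec (diagonal d *ᵥ _), ← hQ', ← mulVec_mulVec, h, mulVec_zero]
    simpa only [mulVec_diagonal, Pi.zero_apply] using congrFun hdiag j
  · intro h
    rw [show diagonal d *ᵥ (Qᵀ *ᵥ z) = 0 from funext fun j => by simpa [mulVec_diagonal] using h j,
      mulVec_zero]

end Conjugation

section SimpleSpectrum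

variable {K : Type*} [Field K] {n : ℕ}

theorem eq_zero_of_forall_conj_diagonal_pow_mulVec_apply_eq_zero {Q : Matrix (Fin n) (Fin n) K}
    (hQ : Q * Qᵀ = 1) {μ : Fin n → K} (hμ : Function.Injective μ) {i : Fin n}
    (hrow : ∀ j, Q i j ≠ 0) {z : Fin n → K}
    (hz : ∀ k < n, ((Q * diagonal μ * Qᵀ) ^ k *ᵥ z) i = 0) : z = 0 := by
  have hcoord : (fun j => Q i j * (Qᵀ *ᵥ z) j) = 0 :=
    eq_zero_of_forall_pow_sum_mul_pow_eq_zero hμ fun k => by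
      rw [← hz k k.isLt, conj_diagonal_pow hQ, conj_diagonal_mulVec_apply]
      simp only [Pi.pow_apply]
      exact Finset.sum_congr rfl fun j _ => by ring
  have hQz : Qᵀ *ᵥ z = 0 :=
    funext fun j => (mul_eq_zero.1 (congrFun hcoord j)).resolve_left (hrow j)
  rw [← mulVec_transpose_mulVec hQ z, hQz, mulVec_zero]

theorem exists_eq_smul_of_forall_mul_eq_zero {ι : Type*} {f : ι → K} (hf : Function.Injective f)
    {u y : ι → K} (hu : u ≠ 0) (hfu : ∀ j, f j * u j = 0) (hfy : ∀ j, f j * y j = 0) :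
    ∃ a : K, y = a • u := by
  obtain ⟨j₀, hj₀⟩ := Function.ne_iff.1 hu
  have hf₀ : f j₀ = 0 := (mul_eq_zero.1 (hfu j₀)).resolve_right hj₀
  refine ⟨y j₀ / u j₀, funext fun j => ?_⟩
  obtain rfl | hj := eq_or_ne j j₀
  · simp [div_mul_cancel₀ _ hj₀]
  · have hfj : f j ≠ 0 := fun h => hj (hf (h.trans hf₀.symm))
    simp [(mul_eq_zero.1 (hfy j)).resolve_left hfj, (mul_eq_zero.1 (hfu j)).resolve_left hfj]

theorem exists_eq_smul_of_conj_diagonal_mulVec_eq_zero {ι : Type*} [Fintype ι] [DecidableEq ι]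
    {Q : Matrix ι ι K} (hQ : Q * Qᵀ = 1) {μ : ι → K} (hμ : Function.Injective μ) {u x : ι → K}
    (hu : u ≠ 0) (hMu : (Q * diagonal μ * Qᵀ) *ᵥ u = 0) (hMx : (Q * diagonal μ * Qᵀ) *ᵥ x = 0) :
    ∃ a : K, x = a • u := by
  have hu' : Qᵀ *ᵥ u ≠ 0 := fun h => hu (by rw [← mulVec_transpose_mulVec hQ u, h, mulVec_zero])
  obtain ⟨a, ha⟩ := exists_eq_smul_of_forall_mul_eq_zero hμ hu'
    ((conj_diagonal_mulVec_eq_zero_iff hQ).1 hMu) ((conj_diagonal_mulVec_eq_zero_iff hQ).1 hMx)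
  refine ⟨a, ?_⟩
  rw [← mulVec_transpose_mulVec hQ x, ha, mulVec_smul, mulVec_transpose_mulVec hQ]

end SimpleSpectrum

section DoubleIntegrator

variable {R ι : Type*} [CommRing R] [Fintype ι] [DecidableEq ι]

theorem natDegree_X_sq_add_X_pow_lt {k n : ℕ} (hk : k < n) :
    ((X ^ 2 + X : R[X]) ^ k).natDegree < 2 * n := by
  have : ((X ^ 2 + X : R[X]) ^ k).natDegree ≤ k * 2 := by compute_degree
  omega

theorem natDegree_X_sq_add_X_pow_mul_X_lt {k n : ℕ} (hk : k < n) :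
    ((X ^ 2 + X : R[X]) ^ k * X).natDegree < 2 * n := by
  have : ((X ^ 2 + X : R[X]) ^ k * X).natDegree ≤ k * 2 + 1 := by compute_degree
  omega

theorem fromBlocks_sq_add_self (L : Matrix ι ι R) :
    fromBlocks 0 1 (-L) (-1) ^ 2 + fromBlocks 0 1 (-L) (-1) = fromBlocks (-L) 0 0 (-L) := by
  simp [sq, fromBlocks_multiply, fromBlocks_add]

theorem fromBlocks_mulVec_elim (L : Matrix ι ι R) (x v : ι → R) :
    fromBlocks 0 1 (-L) (-1) *ᵥ Sum.elim x v = Sum.elim v (-(L *ᵥ x) - v) := by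
  simp [fromBlocks_mulVec, neg_mulVec, sub_eq_add_neg]

theorem aeval_X_sq_add_X_pow_mulVec_elim (L : Matrix ι ι R) (k : ℕ) (x v : ι → R) :
    aeval (fromBlocks 0 1 (-L) (-1)) ((X ^ 2 + X : R[X]) ^ k) *ᵥ Sum.elim x v =
      Sum.elim ((-L) ^ k *ᵥ x) ((-L) ^ k *ᵥ v) := by
  rw [map_pow, map_add, map_pow, aeval_X, fromBlocks_sq_add_self, fromBlocks_diagonal_pow]
  simp [fromBlocks_mulVec]

theorem aeval_X_sq_add_X_pow_mul_X_mulVec_elim (L : Matrix ι ι R) (k : ℕ) (x v : ι → R) :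
    aeval (fromBlocks 0 1 (-L) (-1)) ((X ^ 2 + X : R[X]) ^ k * X) *ᵥ Sum.elim x v =
      Sum.elim ((-L) ^ k *ᵥ v) ((-L) ^ k *ᵥ (-(L *ᵥ x) - v)) := by
  rw [map_mul, aeval_X, ← mulVec_mulVec, fromBlocks_mulVec_elim,
    aeval_X_sq_add_X_pow_mulVec_elim]

end DoubleIntegrator

section VelocityOutput

variable {R : Type*} [Semiring R] {m n : ℕ} (hm : m ≤ n) {c : Fin m → R}
  {C : Matrix (Fin m) (Fin n ⊕ Fin n) R}

theorem mulVec_apply_of_velocity_output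
    (hC : ∀ k j, C k j = if j = Sum.inr (Fin.castLE hm k) then c k else 0)
    (u : Fin n ⊕ Fin n → R) (k : Fin m) :
    (C *ᵥ u) k = c k * u (Sum.inr (Fin.castLE hm k)) := by
  simp [mulVec, dotProduct, hC]

theorem apply_inr_eq_zero_of_velocity_output_mulVec_eq_zero [NoZeroDivisors R]
    (hC : ∀ k j, C k j = if j = Sum.inr (Fin.castLE hm k) then c k else 0) (hc : ∀ k, c k ≠ 0)
    {i : Fin n} (hi : (i : ℕ) < m) {u : Fin n ⊕ Fin n → R} (hu : C *ᵥ u = 0) :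
    u (Sum.inr i) = 0 := by
  have := congrFun hu ⟨i, hi⟩
  rw [mulVec_apply_of_velocity_output hm hC] at this
  exact (mul_eq_zero.1 this).resolve_left (hc _)

end VelocityOutput

theorem velocity_output_kernel_span_general
    {n m : ℕ} (hm : m ≤ n)
    (L : Matrix (Fin n) (Fin n) ℝ)
    (hL1 : L.mulVec (fun _ => 1) = 0)
    (Q : Matrix (Fin n) (Fin n) ℝ) (hQ : Q * Qᵀ = 1)
    (lam : Fin n → ℝ) (hdistinct : Function.Injective lam)
    (hspec : L = Q * Matrix.diagonal lam * Qᵀ)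
    (i : Fin n) (hi : (i : ℕ) < m) (hrow : ∀ j, Q i j ≠ 0)
    (A : Matrix (Fin n ⊕ Fin n) (Fin n ⊕ Fin n) ℝ)
    (hA : A = Matrix.fromBlocks 0 1 (-L) (-1))
    (c : Fin m → ℝ) (hc : ∀ k, c k ≠ 0)
    (C : Matrix (Fin m) (Fin n ⊕ Fin n) ℝ)
    (hC : ∀ k j, C k j = if j = Sum.inr (Fin.castLE hm k) then c k else 0) :
    ∀ w : Fin n ⊕ Fin n → ℝ,
      (∀ k < 2 * n, C.mulVec ((A ^ k).mulVec w) = 0) ↔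
      ∃ a : ℝ, w = a • Sum.elim (fun _ => (1 : ℝ)) (fun _ => 0) := by
  intro w
  constructor
  · intro hw
    obtain ⟨x, v, rfl⟩ : ∃ x v, w = Sum.elim x v := ⟨_, _, (Sum.elim_comp_inl_inr w).symm⟩
    have hobs {q : ℝ[X]} (hq : q.natDegree < 2 * n) :
        (aeval A q *ᵥ Sum.elim x v) (Sum.inr i) = 0 :=
      apply_inr_eq_zero_of_velocity_output_mulVec_eq_zero hm hC hc hi
        (mulVec_aeval_mulVec_eq_zero hw hq)
    have hneg : -L = Q * diagonal (-lam) * Qᵀ := by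
      rw [hspec, ← Matrix.neg_mul, ← Matrix.mul_neg, diagonal_neg]
      rfl
    have hvanish {z : Fin n → ℝ} (hz : ∀ k < n, ((-L) ^ k *ᵥ z) i = 0) : z = 0 :=
      eq_zero_of_forall_conj_diagonal_pow_mulVec_apply_eq_zero hQ (neg_injective.comp hdistinct)
        hrow (hneg ▸ hz)
    obtain rfl : v = 0 := hvanish fun k hk => by
      have := hobs (natDegree_X_sq_add_X_pow_lt hk)
      rwa [hA, aeval_X_sq_add_X_pow_mulVec_elim, Sum.elim_inr] at this
    have hLx : L *ᵥ x = 0 := by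
      have := hvanish fun k hk => by
        have := hobs (natDegree_X_sq_add_X_pow_mul_X_lt hk)
        rwa [hA, aeval_X_sq_add_X_pow_mul_X_mulVec_elim, Sum.elim_inr] at this
      simpa using this
    obtain ⟨a, rfl⟩ := exists_eq_smul_of_conj_diagonal_mulVec_eq_zero hQ hdistinct
      (u := fun _ => 1) (Function.ne_iff.2 ⟨i, one_ne_zero⟩) (hspec ▸ hL1) (hspec ▸ hLx)
    exact ⟨a, by ext (j | j) <;> simp⟩
  · rintro ⟨a, rfl⟩ k -
    have hfix : A *ᵥ Sum.elim (fun _ => (1 : ℝ)) (fun _ => 0) = 0 := by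
      ext (j | j) <;> simp [hA, fromBlocks_mulVec_elim, hL1]
    cases k with
    | zero => ext j; simp [mulVec_apply_of_velocity_output hm hC]
    | succ k =>
      rw [pow_succ, ← mulVec_mulVec, mulVec_smul, hfix, smul_zero, mulVec_zero, mulVec_zero]

/-- With velocity-only outputs and the defense conditions on the Laplacian,
the unobservable subspace of `(A, C)` is exactly the span of `(𝟏, 0)`. -/
theorem velocity_output_kernel_span
    {n m : ℕ} (hm : m ≤ n)
    (L : Matrix (Fin n) (Fin n) ℝ) (hLsym : L.IsSymm)
    (hL1 : L.mulVec (fun _ => 1) = 0)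
    (Q : Matrix (Fin n) (Fin n) ℝ) (hQ : Q * Qᵀ = 1)
    (lam : Fin n → ℝ) (hdistinct : Function.Injective lam)
    (hspec : L = Q * Matrix.diagonal lam * Qᵀ)
    (i : Fin n) (hi : (i : ℕ) < m) (hrow : ∀ j, Q i j ≠ 0)
    (A : Matrix (Fin n ⊕ Fin n) (Fin n ⊕ Fin n) ℝ)
    (hA : A = Matrix.fromBlocks 0 1 (-L) (-1))
    (c : Fin m → ℝ) (hc : ∀ k, c k ≠ 0)
    (C : Matrix (Fin m) (Fin n ⊕ Fin n) ℝ)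
    (hC : ∀ k j, C k j = if j = Sum.inr (Fin.castLE hm k) then c k else 0) :
    ∀ w : Fin n ⊕ Fin n → ℝ,
      (∀ k < 2 * n, C.mulVec ((A ^ k).mulVec w) = 0) ↔
      ∃ a : ℝ, w = a • Sum.elim (fun _ => (1 : ℝ)) (fun _ => 0) :=
  velocity_output_kernel_span_general hm L hL1 Q hQ lam hdistinct hspec i hi hrow A hA c hc C hC
end

section
/- Under the consensus protocol u = −v − L·x with L symmetric positive semidefinite and ker L = span{𝟏}, every solution of ẋ = v, v̇ = −L·x − v converges: vᵢ(t) → 0 for all i and xᵢ(t) − xⱼ(t) → 0 for all i, j as t → ∞. -/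
/-!
Expanding `x` and `v` in an orthonormal eigenbasis of `L` decouples the system into scalar damped
oscillators `ÿ + ẏ + μ y = 0` with `μ ≥ 0`. Each of them has a Lyapunov function decaying
exponentially, so `ẏ → 0` always and `y → 0` when `μ > 0`. The modes with `μ = 0` are multiples
of `𝟏` because `ker L = span {𝟏}`, so they do not contribute to `xᵢ - xⱼ`.
-/

open Matrix Filter Topology

theorem tendsto_zero_of_sq_le {α : Type*} {l : Filter α} {f g : α → ℝ}
    (hfg : ∀ a, f a ^ 2 ≤ g a) (hg : Tendsto g l (𝓝 0)) : Tendsto f l (𝓝 0) := by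
  refine squeeze_zero_norm (fun a => (Real.abs_le_sqrt (hfg a) : ‖f a‖ ≤ √(g a))) ?_
  simpa using hg.sqrt

theorem tendsto_zero_of_hasDerivAt_le_neg_mul {W W' : ℝ → ℝ} {c : ℝ} (hc : 0 < c)
    (hW_nonneg : ∀ t, 0 ≤ W t) (hW : ∀ t, HasDerivAt W (W' t) t)
    (hdecay : ∀ t, W' t ≤ -c * W t) : Tendsto W atTop (𝓝 0) := by
  have hanti : Antitone fun t => Real.exp (c * t) * W t := by
    refine antitone_of_hasDerivAt_nonpos
      (fun t => (((hasDerivAt_id t).const_mul c).exp).mul (hW t)) fun t => ?_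
    have := Real.exp_pos (c * t)
    simp only [id, mul_one, Pi.zero_apply]
    nlinarith [hdecay t]
  have hbound : ∀ t, 0 ≤ t → W t ≤ W 0 * Real.exp (-(c * t)) := by
    intro t ht
    have h := hanti ht
    simp only [mul_zero, Real.exp_zero, one_mul] at h
    rw [Real.exp_neg, ← div_eq_mul_inv, le_div_iff₀ (Real.exp_pos _), mul_comm]
    exact h
  have hlim : Tendsto (fun t => W 0 * Real.exp (-(c * t))) atTop (𝓝 0) := by
    simpa using (Real.tendsto_exp_neg_atTop_nhds_zero.comp
      (tendsto_id.const_mul_atTop hc)).const_mul (W 0)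
  exact squeeze_zero' (.of_forall hW_nonneg)
    (eventually_ge_atTop 0 |>.mono hbound) hlim

theorem tendsto_zero_of_hasDerivAt_neg {p : ℝ → ℝ} (hp : ∀ t, HasDerivAt p (-p t) t) :
    Tendsto p atTop (𝓝 0) := by
  refine tendsto_zero_of_sq_le (fun t => le_rfl) <|
    tendsto_zero_of_hasDerivAt_le_neg_mul two_pos (fun t => sq_nonneg (p t))
      (fun t => (hp t).pow 2) fun t => le_of_eq (by ring)

theorem tendsto_zero_of_damped_oscillator {μ : ℝ} (hμ : 0 < μ) {y p : ℝ → ℝ}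
    (hy : ∀ t, HasDerivAt y (p t) t) (hp : ∀ t, HasDerivAt p (-p t - μ * y t) t) :
    Tendsto y atTop (𝓝 0) ∧ Tendsto p atTop (𝓝 0) := by
  -- `W' = -(p ^ 2 + μ * y ^ 2) ≤ -(μ / (2 * μ + 1)) * W`
  set W : ℝ → ℝ := fun t => (p t + y t / 2) ^ 2 + (μ + 1 / 4) * y t ^ 2
  have hW : ∀ t, HasDerivAt W (-(p t ^ 2 + μ * y t ^ 2)) t := fun t =>
    (((hp t).fun_add ((hy t).div_const 2)).fun_pow 2 |>.fun_add
      (((hy t).pow 2).const_mul _)).congr_deriv (by push_cast; ring)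
  have hWlim : Tendsto W atTop (𝓝 0) :=
    tendsto_zero_of_hasDerivAt_le_neg_mul (c := μ / (2 * μ + 1)) (by positivity)
      (fun t => by positivity) hW fun t => by
        simp only [W]
        rw [neg_mul, neg_le_neg_iff, div_mul_eq_mul_div, div_le_iff₀ (by positivity)]
        nlinarith [mul_nonneg hμ.le (sq_nonneg (p t - y t / 2)), sq_nonneg (p t),
          mul_nonneg hμ.le (sq_nonneg (y t))]
  refine ⟨tendsto_zero_of_sq_le (fun t => ?_) (by simpa using hWlim.const_mul 4),
    tendsto_zero_of_sq_le (fun t => ?_) (by simpa using hWlim.const_mul 2)⟩ <;>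
  · simp only [W]
    nlinarith [sq_nonneg (p t + y t), mul_nonneg hμ.le (sq_nonneg (y t))]

theorem tendsto_of_damped_mode {μ : ℝ} (hμ : 0 ≤ μ) {y p : ℝ → ℝ}
    (hy : ∀ t, HasDerivAt y (p t) t) (hp : ∀ t, HasDerivAt p (-p t - μ * y t) t) :
    Tendsto p atTop (𝓝 0) ∧ (0 < μ → Tendsto y atTop (𝓝 0)) := by
  rcases hμ.eq_or_lt with rfl | hpos
  · exact ⟨tendsto_zero_of_hasDerivAt_neg fun t => by simpa using hp t,
      fun h => (lt_irrefl _ h).elim⟩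
  · exact ⟨(tendsto_zero_of_damped_oscillator hpos hy hp).2,
      fun _ => (tendsto_zero_of_damped_oscillator hpos hy hp).1⟩

theorem HasDerivAt.const_dotProduct {𝕜 ι : Type*} [NontriviallyNormedField 𝕜] [Fintype ι]
    {x : 𝕜 → ι → 𝕜} {x' : ι → 𝕜} {t : 𝕜} (w : ι → 𝕜) (hx : HasDerivAt x x' t) :
    HasDerivAt (fun s => w ⬝ᵥ x s) (w ⬝ᵥ x') t :=
  HasDerivAt.fun_sum fun i _ => (hasDerivAt_pi.1 hx i).const_mul (w i)

theorem hasDerivAt_dotProduct_of_vecMul_eq_smul {ι : Type*} [Fintype ι] {L : Matrix ι ι ℝ}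
    {w : ι → ℝ} {μ : ℝ} (hw : w ᵥ* L = μ • w) {x v : ℝ → ι → ℝ} {t : ℝ}
    (hv : HasDerivAt v (-(L *ᵥ x t) - v t) t) :
    HasDerivAt (fun s => w ⬝ᵥ v s) (-(w ⬝ᵥ v t) - μ * (w ⬝ᵥ x t)) t :=
  (hv.const_dotProduct w).congr_deriv <| by
    rw [dotProduct_sub, dotProduct_neg, dotProduct_mulVec, hw, smul_dotProduct, smul_eq_mul]
    ring

theorem OrthonormalBasis.sum_dotProduct_smul {ι : Type*} [Fintype ι]
    (b : OrthonormalBasis ι ℝ (EuclideanSpace ℝ ι)) (u : ι → ℝ) :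
    ∑ k, (⇑(b k) ⬝ᵥ u) • ⇑(b k) = u := by
  have := congrArg WithLp.ofLp (b.sum_repr' (WithLp.toLp 2 u))
  simpa [EuclideanSpace.inner_eq_star_dotProduct, dotProduct_comm] using this

theorem OrthonormalBasis.tendsto_zero_of_forall_dotProduct {ι α : Type*} [Fintype ι]
    {l : Filter α} (b : OrthonormalBasis ι ℝ (EuclideanSpace ℝ ι)) {u : α → ι → ℝ}
    (hu : ∀ k, Tendsto (fun a => ⇑(b k) ⬝ᵥ u a) l (𝓝 0)) : Tendsto u l (𝓝 0) := by
  rw [show u = fun a => ∑ k, (⇑(b k) ⬝ᵥ u a) • ⇑(b k) from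
    funext fun a => (b.sum_dotProduct_smul (u a)).symm]
  simpa using tendsto_finsetSum _ fun k _ => (hu k).smul_const (⇑(b k))

theorem OrthonormalBasis.tendsto_apply_sub_apply {ι α : Type*} [Fintype ι] {l : Filter α}
    (b : OrthonormalBasis ι ℝ (EuclideanSpace ℝ ι)) {u : α → ι → ℝ}
    (hu : ∀ k, (∀ i j, b k i = b k j) ∨ Tendsto (fun a => ⇑(b k) ⬝ᵥ u a) l (𝓝 0)) (i j : ι) :
    Tendsto (fun a => u a i - u a j) l (𝓝 0) := by
  have hexpand (a : α) : u a i - u a j = ∑ k, (⇑(b k) ⬝ᵥ u a) * (b k i - b k j) := by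
    conv_lhs => rw [← b.sum_dotProduct_smul (u a)]
    simp [Finset.sum_apply, ← Finset.sum_sub_distrib, mul_sub]
  have hterm (k : ι) : Tendsto (fun a => (⇑(b k) ⬝ᵥ u a) * (b k i - b k j)) l (𝓝 0) := by
    rcases hu k with hconst | hlim
    · simpa [hconst i j] using tendsto_const_nhds
    · simpa using hlim.mul_const (b k i - b k j)
  simp_rw [hexpand]
  simpa using tendsto_finsetSum Finset.univ fun k _ => hterm k

/-- Under the consensus protocol `u = −v − L x`, velocities converge to zero
and positions reach consensus. -/
theorem consensus_convergence
    {n : ℕ} (L : Matrix (Fin n) (Fin n) ℝ)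
    (hLpsd : L.PosSemidef)
    (hker : ∀ p : Fin n → ℝ, L.mulVec p = 0 ↔ ∃ a : ℝ, p = fun _ => a)
    (x v : ℝ → Fin n → ℝ)
    (hx : ∀ t, HasDerivAt x (v t) t)
    (hv : ∀ t, HasDerivAt v (-(L.mulVec (x t)) - v t) t) :
    (∀ i, Tendsto (fun t => v t i) atTop (𝓝 0)) ∧
    (∀ i j, Tendsto (fun t => x t i - x t j) atTop (𝓝 0)) := by
  have hL := hLpsd.isHermitian
  obtain ⟨b, μ, hμ, hb⟩ : ∃ (b : OrthonormalBasis (Fin n) ℝ (EuclideanSpace ℝ (Fin n)))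
      (μ : Fin n → ℝ), (∀ k, 0 ≤ μ k) ∧ ∀ k, L *ᵥ ⇑(b k) = μ k • ⇑(b k) :=
    ⟨_, _, hLpsd.eigenvalues_nonneg, hL.mulVec_eigenvectorBasis⟩
  have hmode (k : Fin n) := tendsto_of_damped_mode (hμ k)
    (fun t => (hx t).const_dotProduct (b k))
    (fun t => hasDerivAt_dotProduct_of_vecMul_eq_smul
      (by rw [← mulVec_transpose, (isHermitian_iff_isSymm.1 hL).eq, hb]) (hv t))
  refine ⟨fun i => tendsto_pi_nhds.1 (b.tendsto_zero_of_forall_dotProduct fun k => (hmode k).1) i,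
    b.tendsto_apply_sub_apply fun k => ?_⟩
  rcases (hμ k).eq_or_lt with hk | hk
  · obtain ⟨a, ha⟩ := (hker (b k)).1 (by rw [hb, ← hk, zero_smul])
    exact .inl fun i j => by rw [ha]
  · exact .inr ((hmode k).2 hk)
end

section
/- Let O₁ = [C; CA₁; …; CA₁^{N−1}] and O₂ = [C; CA₂; …; CA₂^{N−1}] for matrices A₁, A₂ ∈ ℝ^{N×N} and C ∈ ℝ^{m×N}, and suppose ker O₁ ∩ ker O₂ = {0} and moreover ker O₁ ∩ e^{−A₁τ}·ker O₂ = {0} for a given τ > 0. Then any nonzero initial deviation z₀ ≠ 0 produces a nonzero output at some time under the switched dynamics (A₁ on [0,τ), A₂ afterwards); i.e., there exists t ≥ 0 with C·z(t) ≠ 0 where z(0) = z₀. -/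
/-!
If the output vanished for all `t ≥ 0`, then on the open interval `(0, τ)` the function
`t ↦ C e^{tA₁} z₀` would vanish, hence so would all its derivatives `C e^{tA₁} A₁ᵏ z₀`, and by
continuity also their values at `t = 0`: `z₀ ∈ ker O₁`. Likewise, on `t > τ` the output is
`C e^{(t-τ)A₂} w` with `w = e^{τA₁} z₀`, so `w ∈ ker O₂`, and the hypothesis on
`ker O₁ ∩ e^{-τA₁} ker O₂` forces `z₀ = 0`.
-/

open Matrix Set

namespace Matrix

variable {m n : Type*} [Fintype m] [Fintype n] [DecidableEq n]

section

-- Any matrix norm will do here: `NormedSpace.exp` only depends on the topology.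
attribute [local instance] Matrix.linftyOpNormedRing Matrix.linftyOpNormedAlgebra

theorem hasDerivAt_mulVec_exp_smul_mulVec (C : Matrix m n ℝ) (A : Matrix n n ℝ) (v : n → ℝ)
    (t : ℝ) :
    HasDerivAt (fun s : ℝ => C *ᵥ (NormedSpace.exp (s • A) *ᵥ v))
      (C *ᵥ (NormedSpace.exp (t • A) *ᵥ (A *ᵥ v))) t := by
  let L : Matrix n n ℝ →L[ℝ] m → ℝ :=
    LinearMap.toContinuousLinearMap (C.mulVecLin ∘ₗ (mulVecBilin ℝ ℝ).flip v)
  rw [mulVec_mulVec v _ A]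
  exact L.hasFDerivAt.comp_hasDerivAt t (hasDerivAt_exp_smul_const A t)

end

theorem mulVec_exp_smul_mulVec_mulVec_eq_zero {C : Matrix m n ℝ} {A : Matrix n n ℝ}
    {v : n → ℝ} {s : Set ℝ} (hs : IsOpen s)
    (h : ∀ t ∈ s, C *ᵥ (NormedSpace.exp (t • A) *ᵥ v) = 0) :
    ∀ t ∈ s, C *ᵥ (NormedSpace.exp (t • A) *ᵥ (A *ᵥ v)) = 0 := by
  intro t ht
  have hzero : (fun u : ℝ => C *ᵥ (NormedSpace.exp (u • A) *ᵥ v)) =ᶠ[nhds t] fun _ => 0 :=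
    Filter.eventuallyEq_of_mem (hs.mem_nhds ht) h
  exact (hasDerivAt_mulVec_exp_smul_mulVec C A v t).deriv.symm.trans
    (hzero.deriv_eq.trans (deriv_const t 0))

theorem mulVec_exp_smul_mulVec_pow_mulVec_eq_zero {C : Matrix m n ℝ} {A : Matrix n n ℝ}
    {v : n → ℝ} {s : Set ℝ} (hs : IsOpen s)
    (h : ∀ t ∈ s, C *ᵥ (NormedSpace.exp (t • A) *ᵥ v) = 0) (k : ℕ) :
    ∀ t ∈ closure s, C *ᵥ (NormedSpace.exp (t • A) *ᵥ (A ^ k *ᵥ v)) = 0 := by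
  have hopen : ∀ t ∈ s, C *ᵥ (NormedSpace.exp (t • A) *ᵥ (A ^ k *ᵥ v)) = 0 := by
    induction k with
    | zero => simpa using h
    | succ k ih =>
      simpa [pow_succ', ← mulVec_mulVec] using mulVec_exp_smul_mulVec_mulVec_eq_zero hs ih
  have hclosed : IsClosed {t : ℝ | C *ᵥ (NormedSpace.exp (t • A) *ᵥ (A ^ k *ᵥ v)) = 0} :=
    isClosed_eq (continuous_iff_continuousAt.2 fun t =>
      (hasDerivAt_mulVec_exp_smul_mulVec C A _ t).continuousAt) continuous_const
  exact closure_minimal hopen hclosed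

end Matrix

theorem switched_detectability_general
    {N m : ℕ} (A₁ A₂ : Matrix (Fin N) (Fin N) ℝ) (C : Matrix (Fin m) (Fin N) ℝ)
    (τ : ℝ) (hτ : 0 < τ)
    (hkerτ : ∀ w : Fin N → ℝ,
      (∀ k < N, C.mulVec ((A₁ ^ k).mulVec w) = 0) →
      (∀ k < N,
        C.mulVec ((A₂ ^ k).mulVec ((NormedSpace.exp (τ • A₁)).mulVec w)) = 0) →
      w = 0)
    (z₀ : Fin N → ℝ) (hz₀ : z₀ ≠ 0)
    (z : ℝ → Fin N → ℝ)
    (hz : ∀ t, z t = if t < τ then (NormedSpace.exp (t • A₁)).mulVec z₀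
      else (NormedSpace.exp ((t - τ) • A₂)).mulVec
        ((NormedSpace.exp (τ • A₁)).mulVec z₀)) :
    ∃ t ≥ (0 : ℝ), C.mulVec (z t) ≠ 0 := by
  by_contra! hout
  have hphase₁ : ∀ t ∈ Ioo 0 τ, C *ᵥ (NormedSpace.exp (t • A₁) *ᵥ z₀) = 0 := fun t ht => by
    simpa [hz, ht.2] using hout t ht.1.le
  have hphase₂ : ∀ s ∈ Ioi (0 : ℝ),
      C *ᵥ (NormedSpace.exp (s • A₂) *ᵥ (NormedSpace.exp (τ • A₁) *ᵥ z₀)) = 0 := fun s hs => by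
    have hτs : ¬ s + τ < τ := by simp only [mem_Ioi] at hs; linarith
    simpa [hz, hτs] using hout (s + τ) (by simp only [mem_Ioi] at hs; linarith)
  refine hz₀ (hkerτ z₀ (fun k _ => ?_) (fun k _ => ?_))
  · simpa using mulVec_exp_smul_mulVec_pow_mulVec_eq_zero isOpen_Ioo hphase₁ k 0
      (by rw [closure_Ioo hτ.ne]; exact ⟨le_rfl, hτ.le⟩)
  · simpa using mulVec_exp_smul_mulVec_pow_mulVec_eq_zero isOpen_Ioi hphase₂ k 0
      (by rw [closure_Ioi]; exact self_mem_Ici)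

/-- If the intersection of the observability kernels (with the flow-shifted
second kernel) is trivial, any nonzero initial deviation produces a nonzero
output at some time under the switched dynamics. -/
theorem switched_detectability
    {N m : ℕ} (A₁ A₂ : Matrix (Fin N) (Fin N) ℝ) (C : Matrix (Fin m) (Fin N) ℝ)
    (τ : ℝ) (hτ : 0 < τ)
    (hker : ∀ w : Fin N → ℝ,
      (∀ k < N, C.mulVec ((A₁ ^ k).mulVec w) = 0) →
      (∀ k < N, C.mulVec ((A₂ ^ k).mulVec w) = 0) → w = 0)
    (hkerτ : ∀ w : Fin N → ℝ,
      (∀ k < N, C.mulVec ((A₁ ^ k).mulVec w) = 0) →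
      (∀ k < N,
        C.mulVec ((A₂ ^ k).mulVec ((NormedSpace.exp (τ • A₁)).mulVec w)) = 0) →
      w = 0)
    (z₀ : Fin N → ℝ) (hz₀ : z₀ ≠ 0)
    (z : ℝ → Fin N → ℝ)
    (hz : ∀ t, z t = if t < τ then (NormedSpace.exp (t • A₁)).mulVec z₀
      else (NormedSpace.exp ((t - τ) • A₂)).mulVec
        ((NormedSpace.exp (τ • A₁)).mulVec z₀)) :
    ∃ t ≥ (0 : ℝ), C.mulVec (z t) ≠ 0 :=
  switched_detectability_general A₁ A₂ C τ hτ hkerτ z₀ hz₀ z hz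
end
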